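/- arXiv:2101.01764 — 2 statements merged into one kernel-verified Lean document; each statement's English description precedes it below -/
import Mathlib

section
/- Let (M,F) be an AR-Finsler manifold. The mean Cartan torsion satisfies I_i = a^{jk}∂̇_i a_{jk} + n·∂̇_i log η; in particular I_i is a rational function in y, independently of whether η is rational in y. -/
/-!
Write `g = η a`. Contracting `∂̇_i g_{jk} = η ∂̇_i a_{jk} + a_{jk} ∂̇_i η` with `g^{jk} = a^{jk}/η`
gives the formula for `I_i`, because `a^{jk} a_{jk} = n`. Contracting the symmetry
`∂̇_i g_{jk} = ∂̇_k g_{ij}` with `a^{jk}` instead gives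
`(n - 1) ∂̇_i log η = a^{jk} (∂̇_k a_{ij} - ∂̇_i a_{jk})`, so `∂̇_i log η`, and with it `I_i`, is
built from the entries of `a`, of its inverse and their derivatives. These are rational: a
polynomial vanishing on an open set is zero, which makes the reciprocal of a nowhere-vanishing
rational function, hence `det a⁻¹ • adj a`, rational.
-/

def IsRat {n : ℕ} (U : Set (Fin n → ℝ)) (f : (Fin n → ℝ) → ℝ) : Prop :=
  ∃ P Q : MvPolynomial (Fin n) ℝ, Q ≠ 0 ∧
    ∀ y ∈ U, f y * MvPolynomial.eval y Q = MvPolynomial.eval y P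

noncomputable def pd {n : ℕ} (i : Fin n) (f : (Fin n → ℝ) → ℝ) (y : Fin n → ℝ) : ℝ :=
  fderiv ℝ f y (Pi.single i 1)

open MvPolynomial ContinuousLinearMap

variable {n : ℕ} {U : Set (Fin n → ℝ)}

namespace MvPolynomial

theorem hasFDerivAt_eval {σ : Type*} [Fintype σ] (P : MvPolynomial σ ℝ) (y : σ → ℝ) :
    HasFDerivAt (eval · P) (∑ j, eval y (pderiv j P) • proj (R := ℝ) (φ := fun _ => ℝ) j) y := by
  classical
  induction P using MvPolynomial.induction_on with
  | C c => simpa using hasFDerivAt_const c y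
  | add p q hp hq =>
    simp only [map_add, add_smul, Finset.sum_add_distrib]
    exact hp.fun_add hq
  | mul_X p i hp =>
    simp only [map_mul, eval_X]
    refine (hp.fun_mul (hasFDerivAt_apply i y)).congr_fderiv ?_
    ext v
    simp [pderiv_X, Pi.single_apply, add_mul, Finset.sum_add_distrib, Finset.mul_sum,
      apply_ite (eval y), mul_assoc]

theorem eq_zero_of_eval_eq_zero_on_open {σ : Type*} [Fintype σ] {s : Set (σ → ℝ)} (hs : IsOpen s)
    (hne : s.Nonempty) {Q : MvPolynomial σ ℝ} (h : ∀ y ∈ s, eval y Q = 0) : Q = 0 := by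
  obtain ⟨y₀, hy₀⟩ := hne
  have hQ := (AnalyticOnNhd.eval_mvPolynomial Q).eqOn_zero_of_preconnected_of_eventuallyEq_zero
    isPreconnected_univ (Set.mem_univ y₀) (Filter.eventually_of_mem (hs.mem_nhds hy₀) h)
  exact MvPolynomial.funext fun x => by simpa using hQ (Set.mem_univ x)

end MvPolynomial

namespace IsRat

variable {f g : (Fin n → ℝ) → ℝ}

theorem congr (hf : IsRat U f) (h : Set.EqOn f g U) : IsRat U g := by
  obtain ⟨P, Q, hQ, hPQ⟩ := hf
  exact ⟨P, Q, hQ, fun y hy => h hy ▸ hPQ y hy⟩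

theorem const (c : ℝ) : IsRat U (fun _ => c) :=
  ⟨C c, 1, one_ne_zero, fun y _ => by simp⟩

theorem add (hf : IsRat U f) (hg : IsRat U g) : IsRat U (f + g) := by
  obtain ⟨P₁, Q₁, hQ₁, h₁⟩ := hf
  obtain ⟨P₂, Q₂, hQ₂, h₂⟩ := hg
  refine ⟨P₁ * Q₂ + P₂ * Q₁, Q₁ * Q₂, mul_ne_zero hQ₁ hQ₂, fun y hy => ?_⟩
  simp only [Pi.add_apply, map_add, map_mul]
  linear_combination eval y Q₂ * h₁ y hy + eval y Q₁ * h₂ y hy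

theorem mul (hf : IsRat U f) (hg : IsRat U g) : IsRat U (f * g) := by
  obtain ⟨P₁, Q₁, hQ₁, h₁⟩ := hf
  obtain ⟨P₂, Q₂, hQ₂, h₂⟩ := hg
  refine ⟨P₁ * P₂, Q₁ * Q₂, mul_ne_zero hQ₁ hQ₂, fun y hy => ?_⟩
  simp only [Pi.mul_apply, map_mul]
  linear_combination eval y Q₂ * g y * h₁ y hy + eval y P₁ * h₂ y hy

theorem neg (hf : IsRat U f) : IsRat U (-f) := by
  obtain ⟨P, Q, hQ, h⟩ := hf
  exact ⟨-P, Q, hQ, fun y hy => by simp [← h y hy]⟩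

theorem inv (hU : IsOpen U) (hf : IsRat U f) (hf₀ : ∀ y ∈ U, f y ≠ 0) :
    IsRat U (fun y => (f y)⁻¹) := by
  obtain ⟨P, Q, hQ, h⟩ := hf
  rcases U.eq_empty_or_nonempty with rfl | hne
  · exact ⟨0, 1, one_ne_zero, fun _ => False.elim⟩
  -- `Q` cannot vanish on the open set `U`, hence neither can `P = f Q`.
  have hP : P ≠ 0 := by
    rintro rfl
    exact hQ <| eq_zero_of_eval_eq_zero_on_open hU hne fun y hy =>
      (mul_eq_zero.1 ((h y hy).trans (map_zero _))).resolve_left (hf₀ y hy)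
  refine ⟨Q, P, hP, fun y hy => ?_⟩
  rw [← h y hy, ← mul_assoc, inv_mul_cancel₀ (hf₀ y hy), one_mul]

theorem pd (hU : IsOpen U) (hfd : DifferentiableOn ℝ f U) (hf : IsRat U f) (i : Fin n) :
    IsRat U (pd i f) := by
  obtain ⟨P, Q, hQ, hPQ⟩ := hf
  refine ⟨pderiv i P * Q - P * pderiv i Q, Q * Q, mul_ne_zero hQ hQ, fun y hy => ?_⟩
  have hprod := ((hfd y hy).differentiableAt (hU.mem_nhds hy)).hasFDerivAt.mul
    (hasFDerivAt_eval Q y)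
  have hP := (hasFDerivAt_eval P y).congr_of_eventuallyEq
    (Filter.eventually_of_mem (hU.mem_nhds hy) hPQ)
  have key : f y * eval y (pderiv i Q) + eval y Q * _root_.pd i f y = eval y (pderiv i P) := by
    simpa [_root_.pd, Pi.single_apply] using
      congrArg (· (Pi.single i 1)) (hprod.unique hP)
  simp only [map_sub, map_mul]
  linear_combination eval y Q * key - eval y (pderiv i Q) * hPQ y hy

end IsRat

-- As a subring, rational functions are closed under `det` and `adjugate` via `RingHom.map_det`.
variable (U) in
def ratFunctions : Subring ((Fin n → ℝ) → ℝ) where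
  carrier := {f | IsRat U f}
  mul_mem' := IsRat.mul
  one_mem' := IsRat.const 1
  add_mem' := IsRat.add
  zero_mem' := IsRat.const 0
  neg_mem' := IsRat.neg

theorem IsRat.sum {ι : Type*} (s : Finset ι) {f : ι → (Fin n → ℝ) → ℝ}
    (h : ∀ i ∈ s, IsRat U (f i)) : IsRat U (fun y => ∑ i ∈ s, f i y) := by
  have : ∑ i ∈ s, f i ∈ ratFunctions U := (ratFunctions U).sum_mem h
  rwa [← Finset.sum_fn]

section Matrix

variable {ι : Type*} [Fintype ι] [DecidableEq ι] (M : Matrix ι ι ((Fin n → ℝ) → ℝ))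

theorem det_map_eval (y : Fin n → ℝ) : (M.map (· y)).det = M.det y :=
  show ((Pi.evalRingHom _ y).mapMatrix M).det = _ by
    rw [← RingHom.map_det]; rfl

theorem adjugate_map_eval (y : Fin n → ℝ) (i j : ι) :
    (M.map (· y)).adjugate i j = M.adjugate i j y :=
  show ((Pi.evalRingHom _ y).mapMatrix M).adjugate i j = _ by
    rw [← RingHom.map_adjugate]; rfl

theorem isRat_det (hM : ∀ i j, IsRat U (M i j)) : IsRat U M.det := by
  let M' : Matrix ι ι (ratFunctions U) := fun i j => ⟨M i j, hM i j⟩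
  have : M = (ratFunctions U).subtype.mapMatrix M' := rfl
  rw [this, ← RingHom.map_det]
  exact M'.det.2

theorem isRat_adjugate (hM : ∀ i j, IsRat U (M i j)) (i j : ι) : IsRat U (M.adjugate i j) := by
  let M' : Matrix ι ι (ratFunctions U) := fun i j => ⟨M i j, hM i j⟩
  have : M = (ratFunctions U).subtype.mapMatrix M' := rfl
  rw [this, ← RingHom.map_adjugate]
  exact (M'.adjugate i j).2

theorem isRat_of_mul_eq_one (hU : IsOpen U) (hM : ∀ i j, IsRat U (M i j))
    {N : Matrix ι ι ((Fin n → ℝ) → ℝ)} (hMN : ∀ y ∈ U, M.map (· y) * N.map (· y) = 1)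
    (i j : ι) : IsRat U (N i j) := by
  refine ((isRat_det M hM).inv hU fun y hy => ?_).mul (isRat_adjugate M hM i j) |>.congr
    fun y hy => ?_
  · rw [← det_map_eval]
    exact Matrix.det_ne_zero_of_right_inverse (hMN y hy)
  · rw [← Matrix.map_apply (f := (· y)) (M := N), ← Matrix.inv_eq_right_inv (hMN y hy)]
    simp [Matrix.inv_def, det_map_eval, adjugate_map_eval]

end Matrix

theorem pd_log {f : (Fin n → ℝ) → ℝ} {y : Fin n → ℝ} (hf : DifferentiableAt ℝ f y)
    (hy : f y ≠ 0) (i : Fin n) : pd i (fun z => Real.log (f z)) y = pd i f y / f y := by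
  simp [pd, (hf.hasFDerivAt.log hy).fderiv, div_eq_inv_mul]

section Contraction

-- Pointwise at `y`: `A = (a_{jk})`, `B = (a^{jk})`, `dA l = (∂̇_l a_{jk})`, `dη l = ∂̇_l η`.

variable {ι : Type*} [Fintype ι] [DecidableEq ι] {A B : Matrix ι ι ℝ}

theorem sum_sum_mul_eq_card (hAB : A * B = 1) (hA : A.IsSymm) :
    ∑ j, ∑ k, B j k * A j k = Fintype.card ι := by
  calc ∑ j, ∑ k, B j k * A j k = (B * A).trace := by
        simp [Matrix.trace, Matrix.mul_apply, hA.apply]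
    _ = Fintype.card ι := by rw [mul_eq_one_comm.1 hAB, Matrix.trace_one]

theorem sum_sum_mul_mul_eq (hAB : A * B = 1) (v : ι → ℝ) (i : ι) :
    ∑ j, ∑ k, B j k * (A i j * v k) = v i := by
  calc ∑ j, ∑ k, B j k * (A i j * v k) = ∑ k, (A * B) i k * v k := by
        simp only [Matrix.mul_apply, Finset.sum_mul]
        rw [Finset.sum_comm]
        exact Finset.sum_congr rfl fun k _ => Finset.sum_congr rfl fun j _ => by ring
    _ = v i := by simp [hAB, Matrix.one_apply]

theorem sum_sum_div_mul_eq (hAB : A * B = 1) (hA : A.IsSymm) {η : ℝ} (hη : η ≠ 0) (dη : ℝ)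
    (dA : Matrix ι ι ℝ) :
    ∑ j, ∑ k, B j k / η * (η * dA j k + A j k * dη)
      = ∑ j, ∑ k, B j k * dA j k + Fintype.card ι * (dη / η) := by
  calc ∑ j, ∑ k, B j k / η * (η * dA j k + A j k * dη)
        = ∑ j, ∑ k, (B j k * dA j k + B j k * A j k * (dη / η)) := by
        refine Finset.sum_congr rfl fun j _ => Finset.sum_congr rfl fun k _ => ?_
        field_simp
    _ = _ := by
        simp only [Finset.sum_add_distrib, ← Finset.sum_mul, sum_sum_mul_eq_card hAB hA]

theorem card_sub_one_mul_eq (hAB : A * B = 1) (hA : A.IsSymm) (η : ℝ) (dη : ι → ℝ)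
    (dA : ι → Matrix ι ι ℝ)
    (h : ∀ i j k, η * dA i j k + A j k * dη i = η * dA k i j + A i j * dη k) (i : ι) :
    (Fintype.card ι - 1) * dη i
      = η * (∑ j, ∑ k, B j k * dA k i j - ∑ j, ∑ k, B j k * dA i j k) := by
  have hcontr : ∑ j, ∑ k, B j k * (η * dA i j k + A j k * dη i)
      = ∑ j, ∑ k, B j k * (η * dA k i j + A i j * dη k) := by
    simp only [h]
  have hl : ∑ j, ∑ k, B j k * (η * dA i j k + A j k * dη i)
      = η * ∑ j, ∑ k, B j k * dA i j k + Fintype.card ι * dη i := by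
    rw [← sum_sum_mul_eq_card hAB hA]
    simp only [mul_add, Finset.sum_add_distrib, Finset.mul_sum, Finset.sum_mul]
    congr 1 <;> exact Finset.sum_congr rfl fun j _ => Finset.sum_congr rfl fun k _ => by ring
  have hr : ∑ j, ∑ k, B j k * (η * dA k i j + A i j * dη k)
      = η * ∑ j, ∑ k, B j k * dA k i j + dη i := by
    rw [← sum_sum_mul_mul_eq hAB dη i]
    simp only [mul_add, Finset.sum_add_distrib, Finset.mul_sum]
    congr 1
    exact Finset.sum_congr rfl fun j _ => Finset.sum_congr rfl fun k _ => by ring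
  rw [hl, hr] at hcontr
  linarith

end Contraction

/-- For an AR-Finsler manifold with `g_{ij} = η a_{ij}`, `g^{jk} = a^{jk}/η`, the mean
Cartan torsion `I_i = g^{jk} C_{ijk}` satisfies
`I_i = a^{jk} ∂̇_i a_{jk} + n ∂̇_i log η`; in particular each `I_i` is a rational
function in `y` (regardless of whether `η` is rational in `y`). -/
theorem stmt4 {n : ℕ} (hn : 2 ≤ n) (U : Set (Fin n → ℝ)) (hU : IsOpen U)
    (η : (Fin n → ℝ) → ℝ) (a aInv : Fin n → Fin n → (Fin n → ℝ) → ℝ)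
    (I : Fin n → (Fin n → ℝ) → ℝ)
    (hη : ∀ y ∈ U, 0 < η y) (hηd : Differentiable ℝ η)
    (had : ∀ i j, Differentiable ℝ (a i j))
    (ha : ∀ i j, IsRat U (a i j))
    (hasym : ∀ i j, ∀ y ∈ U, a i j y = a j i y)
    (hInv : ∀ y ∈ U, ∀ j k, ∑ i, a j i y * aInv i k y = if j = k then (1:ℝ) else 0)
    (hCsym : ∀ i j k, ∀ y ∈ U,
      η y * pd i (a j k) y + a j k y * pd i η y
        = η y * pd k (a i j) y + a i j y * pd k η y)
    (hI : ∀ i, ∀ y ∈ U, I i y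
      = ∑ j, ∑ k, (aInv j k y / η y) * (η y * pd i (a j k) y + a j k y * pd i η y)) :
    ∀ i, (∀ y ∈ U,
        I i y = (∑ j, ∑ k, aInv j k y * pd i (a j k) y)
          + (n : ℝ) * pd i (fun z => Real.log (η z)) y)
      ∧ IsRat U (I i) := by
  have hAB (y : Fin n → ℝ) (hy : y ∈ U) :
      (Matrix.of a).map (· y) * (Matrix.of aInv).map (· y) = 1 := by
    ext j k
    simpa [Matrix.mul_apply, Matrix.one_apply] using hInv y hy j k
  have hA (y : Fin n → ℝ) (hy : y ∈ U) : ((Matrix.of a).map (· y)).IsSymm :=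
    Matrix.IsSymm.ext fun j k => hasym k j y hy
  have haInv : ∀ j k, IsRat U (aInv j k) := isRat_of_mul_eq_one (Matrix.of a) hU ha hAB
  intro i
  set S := fun y => ∑ j, ∑ k, aInv j k y * pd i (a j k) y
  set T := fun y => ∑ j, ∑ k, aInv j k y * pd k (a i j) y
  have hn₁ : (n : ℝ) - 1 ≠ 0 := by
    have : (2 : ℝ) ≤ n := by exact_mod_cast hn
    linarith
  have hlog (y) (hy : y ∈ U) : pd i (fun z => Real.log (η z)) y = (T y - S y) / (n - 1) := by
    have := card_sub_one_mul_eq (hAB y hy) (hA y hy) (η y) (fun l => pd l η y)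
      (fun l => Matrix.of fun j k => pd l (a j k) y) (fun i j k => hCsym i j k y hy) i
    simp only [Fintype.card_fin, Matrix.map_apply, Matrix.of_apply] at this
    rw [pd_log (hηd y) (hη y hy).ne', div_eq_div_iff (hη y hy).ne' hn₁]
    linear_combination this
  have hIeq (y) (hy : y ∈ U) : I i y = S y + n * pd i (fun z => Real.log (η z)) y := by
    rw [hI i y hy, pd_log (hηd y) (hη y hy).ne']
    simpa using sum_sum_div_mul_eq (hAB y hy) (hA y hy) (hη y hy).ne' (pd i η y)
      (Matrix.of fun j k => pd i (a j k) y)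
  refine ⟨hIeq, ?_⟩
  have hS : IsRat U S := IsRat.sum _ fun j _ => IsRat.sum _ fun k _ =>
    (haInv j k).mul ((ha j k).pd hU (had j k).differentiableOn i)
  have hT : IsRat U T := IsRat.sum _ fun j _ => IsRat.sum _ fun k _ =>
    (haInv j k).mul ((ha i j).pd hU (had i j).differentiableOn k)
  refine (hS.add ((IsRat.const ((n : ℝ) / (n - 1))).mul (hT.add hS.neg))).congr fun y hy => ?_
  simp only [Pi.add_apply, Pi.mul_apply, Pi.neg_apply, hIeq y hy, hlog y hy]
  ring
end

section
/- The generalized Kropina change F̃ = F^{k+1}/β^k of an m-th root metric F = A^{1/m} is an AR-Finsler metric: its fundamental tensor satisfies g̃_{ij} = η̃·ã_{ij} with η̃ = A^{(2k+2−m)/m}/β^{2k} and ã_{ij} = (k(2k+1)/β²)A b_i b_j + ((k+1)/m)∂̇_i∂̇_j A + ((k+1)(2k−m+2)/(m²A))∂̇_iA∂̇_jA − (2k(k+1)/(mβ))(b_j∂̇_iA + b_i∂̇_jA), where ã_{ij} are rational functions in y, homogeneous of degree m−2. -/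
/-!
Write `A` and `β` as polynomials. On the open set where both are positive,
`F̃² = A ^ (2(k+1)/m) * β ^ (-2k)`, and differentiating `A ^ a * β ^ c * P` for a polynomial `P`
gives `A ^ (a-1) * β ^ (c-1)` times another polynomial. Two differentiations therefore express
`g̃_{ij}` as `A ^ (a-2) * β ^ (-2k-2)` times an explicit polynomial, which is `η̃ ã_{ij}` after
clearing denominators. The same bookkeeping shows that `A β² ã_{ij}` is a polynomial, and the
homogeneity of `ã_{ij}` comes from `∂̇_i A`, `∂̇_i ∂̇_j A` being homogeneous polynomials of
degrees `m - 1`, `m - 2`.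
-/

open MvPolynomial Topology

theorem MvPolynomial.IsHomogeneous.eval_smul {σ R : Type*} [CommSemiring R]
    {φ : MvPolynomial σ R} {d : ℕ} (hφ : φ.IsHomogeneous d) (t : R) (y : σ → R) :
    eval (t • y) φ = t ^ d * eval y φ := by
  rw [eval_eq, eval_eq, Finset.mul_sum]
  refine Finset.sum_congr rfl fun s hs => ?_
  simp only [Pi.smul_apply, smul_eq_mul, mul_pow, Finset.prod_mul_distrib,
    Finset.prod_pow_eq_pow_sum, ← hφ.degree_eq_sum_deg_support hs]
  ring

theorem MvPolynomial.isHomogeneous_sum_C_mul_prod_X {σ R : Type*} [Fintype σ] [DecidableEq σ]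
    [CommSemiring R] {m : ℕ} (c : (Fin m → σ) → R) :
    (∑ f, C (c f) * ∏ t, X (f t) : MvPolynomial σ R).IsHomogeneous m :=
  IsHomogeneous.sum _ _ _ fun f _ => by
    simpa using (isHomogeneous_C σ (c f)).mul
      (IsHomogeneous.prod Finset.univ _ (fun _ => 1) fun t _ => isHomogeneous_X R (f t))

theorem MvPolynomial.pderiv_sum_C_mul_X {σ R : Type*} [Fintype σ] [DecidableEq σ]
    [CommSemiring R] (b : σ → R) (i : σ) :
    pderiv i (∑ l, C (b l) * X l : MvPolynomial σ R) = C (b i) := by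
  simp [pderiv_X, Pi.single_apply]

theorem rpow_one_div_pow_div_pow_sq {a w : ℝ} (ha : 0 ≤ a) (hw : 0 ≤ w) (m : ℝ) (k : ℕ) :
    ((a ^ (1 / m)) ^ (k + 1) / w ^ k) ^ 2 = a ^ (2 * (k + 1) / m) * w ^ (-(2 * k : ℝ)) := by
  rw [div_pow, ← pow_mul, ← pow_mul, ← Real.rpow_natCast, ← Real.rpow_mul ha, Real.rpow_neg hw,
    ← Real.rpow_natCast w, div_eq_mul_inv]
  push_cast
  ring_nf

section FiberDerivative

variable {n : ℕ}

theorem isRat_of_forall_eq_div {U : Set (Fin n → ℝ)} {f : (Fin n → ℝ) → ℝ}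
    (P Q : MvPolynomial (Fin n) ℝ) (hQ : ∀ y ∈ U, eval y Q ≠ 0)
    (hf : ∀ y ∈ U, f y = eval y P / eval y Q) : IsRat U f := by
  rcases U.eq_empty_or_nonempty with rfl | ⟨y₀, hy₀⟩
  · exact ⟨0, 1, one_ne_zero, by simp⟩
  · refine ⟨P, Q, fun h => hQ y₀ hy₀ (by simp [h]), fun y hy => ?_⟩
    rw [hf y hy, div_mul_cancel₀ _ (hQ y hy)]

theorem IsRat.congr_s18 {U : Set (Fin n → ℝ)} {f g : (Fin n → ℝ) → ℝ} (h : IsRat U f)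
    (hfg : ∀ y ∈ U, f y = g y) : IsRat U g := by
  obtain ⟨P, Q, hQ, hPQ⟩ := h
  exact ⟨P, Q, hQ, fun y hy => hfg y hy ▸ hPQ y hy⟩

theorem MvPolynomial.hasFDerivAt_eval_s18 (P : MvPolynomial (Fin n) ℝ) (y : Fin n → ℝ) :
    HasFDerivAt (fun z => eval z P)
      (∑ i, eval y (pderiv i P) • (ContinuousLinearMap.proj i : (Fin n → ℝ) →L[ℝ] ℝ)) y := by
  induction P using MvPolynomial.induction_on with
  | C a => simpa using hasFDerivAt_const a y
  | add p q hp hq =>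
    simp only [map_add, Finset.sum_add_distrib, add_smul]
    exact hp.fun_add hq
  | mul_X p j hp =>
    simp only [map_mul, eval_X]
    refine (hp.fun_mul (hasFDerivAt_apply j y)).congr_fderiv ?_
    ext v
    simp [Pi.single_apply, apply_ite, ite_mul, Finset.sum_add_distrib, add_mul, Finset.mul_sum,
      mul_assoc]

theorem pd_eval (P : MvPolynomial (Fin n) ℝ) (i : Fin n) :
    pd i (fun z => eval z P) = fun y => eval y (pderiv i P) := by
  ext y
  simp [pd, (P.hasFDerivAt_eval_s18 y).fderiv, Pi.single_apply]

theorem Filter.EventuallyEq.pd {f g : (Fin n → ℝ) → ℝ} {y : Fin n → ℝ} (h : f =ᶠ[𝓝 y] g)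
    (i : Fin n) : _root_.pd i f =ᶠ[𝓝 y] _root_.pd i g :=
  h.fderiv.mono fun z hz => by rw [_root_.pd, _root_.pd, hz]

theorem pd_rpow_mul_rpow_mul_eval (F G P : MvPolynomial (Fin n) ℝ) (a c : ℝ) (i : Fin n)
    {y : Fin n → ℝ} (hF : eval y F ≠ 0) (hG : eval y G ≠ 0) :
    pd i (fun z => eval z F ^ a * eval z G ^ c * eval z P) y =
      eval y F ^ (a - 1) * eval y G ^ (c - 1) * eval y
        (C a * pderiv i F * G * P + C c * F * pderiv i G * P + F * G * pderiv i P) := by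
  have hd := (((F.hasFDerivAt_eval_s18 y).rpow_const (p := a) (Or.inl hF)).fun_mul
    ((G.hasFDerivAt_eval_s18 y).rpow_const (p := c) (Or.inl hG))).fun_mul (P.hasFDerivAt_eval_s18 y)
  rw [pd, hd.fderiv]
  simp only [Real.rpow_sub_one hG, Real.rpow_sub_one hF, smul_add, add_apply, smul_apply,
    sum_apply, ContinuousLinearMap.proj_apply, Pi.single_apply, smul_eq_mul, mul_ite, mul_one,
    mul_zero, Finset.sum_ite_eq', Finset.mem_univ, ↓reduceIte, map_add, map_mul, eval_C]
  field_simp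
  ring

theorem pd_rpow_mul_rpow_eval (F G : MvPolynomial (Fin n) ℝ) (a c : ℝ) (i : Fin n)
    {y : Fin n → ℝ} (hF : eval y F ≠ 0) (hG : eval y G ≠ 0) :
    pd i (fun z => eval z F ^ a * eval z G ^ c) y =
      eval y F ^ (a - 1) * eval y G ^ (c - 1)
        * eval y (C a * pderiv i F * G + C c * F * pderiv i G) := by
  simpa using pd_rpow_mul_rpow_mul_eval F G 1 a c i hF hG

/-- The paper's `ã_{ij}`. -/
noncomputable def kropinaTensor (m : ℝ) (k : ℕ) (b : Fin n → ℝ) (A β : (Fin n → ℝ) → ℝ)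
    (i j : Fin n) (y : Fin n → ℝ) : ℝ :=
  ((k : ℝ) * (2 * k + 1) / β y ^ 2) * A y * b i * b j
    + (((k : ℝ) + 1) / m) * pd i (pd j A) y
    + (((k : ℝ) + 1) * (2 * k - m + 2) / (m ^ 2 * A y)) * pd i A y * pd j A y
    - (2 * (k : ℝ) * (k + 1) / (m * β y)) * (b j * pd i A y + b i * pd j A y)

theorem half_pd_pd_rpow_mul_rpow_eq_mul_kropinaTensor (PA Pβ : MvPolynomial (Fin n) ℝ)
    (b : Fin n → ℝ) (hPβ : ∀ l, pderiv l Pβ = C (b l)) {m : ℝ} (hm : m ≠ 0) (k : ℕ)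
    (i j : Fin n) {y : Fin n → ℝ} (hA : 0 < eval y PA) (hβ : 0 < eval y Pβ) :
    (1 / 2) * pd i (pd j (fun z => eval z PA ^ (2 * (k + 1) / m) * eval z Pβ ^ (-(2 * k : ℝ)))) y
      = eval y PA ^ ((2 * k + 2 - m) / m) / eval y Pβ ^ (2 * k)
        * kropinaTensor m k b (fun z => eval z PA) (fun z => eval z Pβ) i j y := by
  set a : ℝ := 2 * (k + 1) / m
  set c : ℝ := -(2 * k : ℝ)
  have hfirst : pd j (fun z => eval z PA ^ a * eval z Pβ ^ c) =ᶠ[𝓝 y] fun z =>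
      eval z PA ^ (a - 1) * eval z Pβ ^ (c - 1)
        * eval z (C a * pderiv j PA * Pβ + C c * PA * pderiv j Pβ) := by
    filter_upwards [(PA.continuous_eval.continuousAt (x := y)).eventually_ne hA.ne',
      (Pβ.continuous_eval.continuousAt (x := y)).eventually_ne hβ.ne'] with z hAz hβz
    exact pd_rpow_mul_rpow_eval PA Pβ a c j hAz hβz
  rw [(hfirst.pd i).self_of_nhds, pd_rpow_mul_rpow_mul_eval _ _ _ _ _ _ hA.ne' hβ.ne']
  have ha : a - 1 - 1 = (2 * k + 2 - m) / m - 1 := by simp only [a]; field_simp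
  have hc : c - 1 - 1 = -((2 * k + 2 : ℕ) : ℝ) := by simp only [c]; push_cast; ring
  rw [ha, hc, Real.rpow_sub_one hA.ne', Real.rpow_neg hβ.le, Real.rpow_natCast]
  simp only [kropinaTensor, pd_eval, hPβ, map_add, map_mul, map_sub, map_zero, eval_C,
    Derivation.leibniz, smul_eq_mul, pderiv_C, a, c]
  field_simp
  ring

theorem isRat_kropinaTensor (PA Pβ : MvPolynomial (Fin n) ℝ) (b : Fin n → ℝ) (m : ℝ) (k : ℕ)
    (i j : Fin n) :
    IsRat {y | 0 < eval y PA ∧ 0 < eval y Pβ}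
      (kropinaTensor m k b (fun z => eval z PA) (fun z => eval z Pβ) i j) := by
  refine isRat_of_forall_eq_div
    (C ((k : ℝ) * (2 * k + 1) * b i * b j) * PA ^ 2
      + C (((k : ℝ) + 1) / m) * pderiv i (pderiv j PA) * PA * Pβ ^ 2
      + C (((k : ℝ) + 1) * (2 * k - m + 2) / m ^ 2) * pderiv i PA * pderiv j PA * Pβ ^ 2
      - C (2 * (k : ℝ) * (k + 1) / m) * (C (b j) * pderiv i PA + C (b i) * pderiv j PA) * PA * Pβ)
    (PA * Pβ ^ 2) (fun y hy => by simp [hy.1.ne', hy.2.ne']) fun y hy => ?_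
  have hA : eval y PA ≠ 0 := hy.1.ne'
  have hβ : eval y Pβ ≠ 0 := hy.2.ne'
  rw [eq_div_iff (by simp [hA, hβ])]
  simp only [kropinaTensor, pd_eval, map_add, map_sub, map_mul, map_pow, eval_C]
  field_simp

theorem kropinaTensor_smul (PA Pβ : MvPolynomial (Fin n) ℝ) {m : ℕ} (hm : 2 ≤ m)
    (hPA : PA.IsHomogeneous m) (hPβ : Pβ.IsHomogeneous 1) (k : ℕ) (b : Fin n → ℝ) (i j : Fin n)
    {t : ℝ} (ht : t ≠ 0) (y : Fin n → ℝ) :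
    kropinaTensor m k b (fun z => eval z PA) (fun z => eval z Pβ) i j (t • y)
      = t ^ ((m : ℝ) - 2)
        * kropinaTensor m k b (fun z => eval z PA) (fun z => eval z Pβ) i j y := by
  obtain ⟨d, rfl⟩ : ∃ d, m = d + 2 := ⟨m - 2, by omega⟩
  have hd : (((d + 2 : ℕ) : ℝ) - 2) = d := by push_cast; ring
  simp only [kropinaTensor, pd_eval, hPA.eval_smul, hPβ.eval_smul, hPA.pderiv.eval_smul,
    hPA.pderiv.pderiv.eval_smul, hd, Real.rpow_natCast, Nat.add_one_sub_one]
  field_simp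
  ring

end FiberDerivative

theorem stmt18_general {n m k : ℕ} (hm : 3 ≤ m)
    (c : (Fin m → Fin n) → ℝ) (b : Fin n → ℝ)
    (A F β Ft : (Fin n → ℝ) → ℝ)
    (hA : ∀ y, A y = ∑ f : Fin m → Fin n, c f * ∏ t, y (f t))
    (hβ : ∀ y, β y = ∑ i, b i * y i)
    (U : Set (Fin n → ℝ)) (hU : U = {y : Fin n → ℝ | 0 < A y ∧ 0 < β y})
    (hF : ∀ y ∈ U, F y = A y ^ ((1 : ℝ) / m))
    (hFt : ∀ y ∈ U, Ft y = F y ^ (k + 1) / β y ^ k)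
    (gt at' : Fin n → Fin n → (Fin n → ℝ) → ℝ) (ηt : (Fin n → ℝ) → ℝ)
    (hgt : ∀ i j, ∀ y ∈ U, gt i j y = (1 / 2) * pd i (pd j (fun z => Ft z ^ 2)) y)
    (hηt : ∀ y ∈ U, ηt y = A y ^ ((2 * (k : ℝ) + 2 - m) / m) / β y ^ (2 * k))
    (hat : ∀ i j, ∀ y ∈ U, at' i j y
      = ((k : ℝ) * (2 * k + 1) / β y ^ 2) * A y * b i * b j
        + (((k : ℝ) + 1) / m) * pd i (pd j A) y
        + (((k : ℝ) + 1) * (2 * k - (m : ℝ) + 2) / ((m : ℝ) ^ 2 * A y))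
          * pd i A y * pd j A y
        - (2 * (k : ℝ) * (k + 1) / ((m : ℝ) * β y))
          * (b j * pd i A y + b i * pd j A y)) :
    (∀ i j, ∀ y ∈ U, gt i j y = ηt y * at' i j y)
    ∧ (∀ i j, IsRat U (at' i j))
    ∧ (∀ i j, ∀ t : ℝ, 0 < t → ∀ y ∈ U,
        at' i j (t • y) = t ^ ((m : ℝ) - 2) * at' i j y) := by
  set PA : MvPolynomial (Fin n) ℝ := ∑ f, C (c f) * ∏ t, X (f t)
  set Pβ : MvPolynomial (Fin n) ℝ := ∑ l, C (b l) * X l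
  obtain rfl : A = fun y => eval y PA := funext fun y => by simp [PA, hA]
  obtain rfl : β = fun y => eval y Pβ := funext fun y => by simp [Pβ, hβ]
  subst hU
  refine ⟨fun i j y hy => ?_, fun i j => ?_, fun i j t ht y hy => ?_⟩
  · have hsq : (fun z => Ft z ^ 2) =ᶠ[𝓝 y]
        fun z => eval z PA ^ (2 * (k + 1) / (m : ℝ)) * eval z Pβ ^ (-(2 * k : ℝ)) := by
      filter_upwards [(PA.continuous_eval.tendsto y).eventually_const_lt hy.1,
        (Pβ.continuous_eval.tendsto y).eventually_const_lt hy.2] with z hAz hβz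
      rw [hFt z ⟨hAz, hβz⟩, hF z ⟨hAz, hβz⟩, rpow_one_div_pow_div_pow_sq hAz.le hβz.le]
    rw [hgt i j y hy, ((hsq.pd j).pd i).self_of_nhds,
      half_pd_pd_rpow_mul_rpow_eq_mul_kropinaTensor PA Pβ b (pderiv_sum_C_mul_X b)
        (Nat.cast_ne_zero.2 (by omega)) k i j hy.1 hy.2, hηt y hy, hat i j y hy]
    rfl
  · exact (isRat_kropinaTensor PA Pβ b m k i j).congr_s18 fun y hy => (hat i j y hy).symm
  · have hPA : PA.IsHomogeneous m := isHomogeneous_sum_C_mul_prod_X c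
    have hPβ : Pβ.IsHomogeneous 1 := IsHomogeneous.sum _ _ _ fun l _ => isHomogeneous_C_mul_X _ l
    have hty : t • y ∈ {y | 0 < eval y PA ∧ 0 < eval y Pβ} :=
      ⟨by rw [hPA.eval_smul]; exact mul_pos (pow_pos ht m) hy.1,
        by rw [hPβ.eval_smul]; exact mul_pos (pow_pos ht 1) hy.2⟩
    rw [hat i j _ hty, hat i j y hy]
    exact kropinaTensor_smul PA Pβ (by omega) hPA hPβ k b i j ht.ne' y

/-- The generalized Kropina change `F̃ = F^{k+1}/β^k` of an `m`-th root metric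
`F = A^{1/m}` is an AR-Finsler metric: its fundamental tensor
`g̃_{ij} = (1/2)∂̇_i∂̇_j F̃²` satisfies `g̃_{ij} = η̃ ã_{ij}` with
`η̃ = A^{(2k+2−m)/m}/β^{2k}` and
`ã_{ij} = (k(2k+1)/β²) A b_i b_j + ((k+1)/m) ∂̇_i∂̇_j A
        + ((k+1)(2k−m+2)/(m²A)) ∂̇_i A ∂̇_j A − (2k(k+1)/(mβ))(b_j ∂̇_i A + b_i ∂̇_j A)`,
where the `ã_{ij}` are rational in `y` and positively homogeneous of degree `m−2`. -/
theorem stmt18 {n m k : ℕ} (hm : 3 ≤ m) (hk : 0 < k)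
    (c : (Fin m → Fin n) → ℝ) (b : Fin n → ℝ)
    (A F β Ft : (Fin n → ℝ) → ℝ)
    (hA : ∀ y, A y = ∑ f : Fin m → Fin n, c f * ∏ t, y (f t))
    (hβ : ∀ y, β y = ∑ i, b i * y i)
    (U : Set (Fin n → ℝ)) (hU : U = {y : Fin n → ℝ | 0 < A y ∧ 0 < β y})
    (hF : ∀ y ∈ U, F y = A y ^ ((1 : ℝ) / m))
    (hFt : ∀ y ∈ U, Ft y = F y ^ (k + 1) / β y ^ k)
    (gt at' : Fin n → Fin n → (Fin n → ℝ) → ℝ) (ηt : (Fin n → ℝ) → ℝ)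
    (hgt : ∀ i j, ∀ y ∈ U, gt i j y = (1 / 2) * pd i (pd j (fun z => Ft z ^ 2)) y)
    (hηt : ∀ y ∈ U, ηt y = A y ^ ((2 * (k : ℝ) + 2 - m) / m) / β y ^ (2 * k))
    (hat : ∀ i j, ∀ y ∈ U, at' i j y
      = ((k : ℝ) * (2 * k + 1) / β y ^ 2) * A y * b i * b j
        + (((k : ℝ) + 1) / m) * pd i (pd j A) y
        + (((k : ℝ) + 1) * (2 * k - (m : ℝ) + 2) / ((m : ℝ) ^ 2 * A y))
          * pd i A y * pd j A y
        - (2 * (k : ℝ) * (k + 1) / ((m : ℝ) * β y))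
          * (b j * pd i A y + b i * pd j A y)) :
    (∀ i j, ∀ y ∈ U, gt i j y = ηt y * at' i j y)
    ∧ (∀ i j, IsRat U (at' i j))
    ∧ (∀ i j, ∀ t : ℝ, 0 < t → ∀ y ∈ U,
        at' i j (t • y) = t ^ ((m : ℝ) - 2) * at' i j y) :=
  stmt18_general hm c b A F β Ft hA hβ U hU hF hFt gt at' ηt hgt hηt hat
end
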